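/- arXiv:2512.13273 — 3 statements merged into one kernel-verified Lean document; each statement's English description precedes it below -/
import Mathlib

section
/- Let D be a triangulated category and let t1 = (𝒰1,𝒱1), t2 = (𝒰2,𝒱2) be torsion pairs in D with t1 ≼ t2, i.e. 𝒰1 ⊆ 𝒰2 and 𝒰1[1] ⊆ 𝒰2. Then 𝒰2 = 𝒰1 * (𝒰2 ∩ 𝒱1) and 𝒱1 = (𝒰2 ∩ 𝒱1) * 𝒱2. -/
open CategoryTheory Category Limits Pretriangulated

universe v u

variable (D : Type u) [Category.{v} D] [Preadditive D] [HasZeroObject D]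
  [HasShift D ℤ] [∀ n : ℤ, (shiftFunctor D n).Additive]
  [Pretriangulated D] [HasBinaryBiproducts D]

/-- `shiftSet D S n` is the full subcategory `S[n]`: objects isomorphic to `X⟦n⟧`
with `X ∈ S`. -/
def shiftSet (S : Set D) (n : ℤ) : Set D :=
  {A | ∃ B ∈ S, Nonempty (A ≅ B⟦n⟧)}

/-- `starSet D X Y` is `X * Y`: the class of objects `A` admitting a distinguished
triangle `X → A → Y → X[1]` with `X ∈ 𝒳` and `Y ∈ 𝒴`. -/
def starSet (X Y : Set D) : Set D :=
  {A | ∃ (B C : D) (f : B ⟶ A) (g : A ⟶ C) (h : C ⟶ B⟦(1 : ℤ)⟧),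
    B ∈ X ∧ C ∈ Y ∧ Triangle.mk f g h ∈ distTriang D}

/-- `Hom(X, Y) = 0`: every morphism from an object of `X` to an object of `Y` is zero. -/
def homZero (X Y : Set D) : Prop :=
  ∀ A ∈ X, ∀ B ∈ Y, ∀ f : A ⟶ B, f = 0

/-- a class of objects closed under isomorphisms -/
def isoClosed (S : Set D) : Prop :=
  ∀ ⦃A B : D⦄, (A ≅ B) → A ∈ S → B ∈ S

/-- an additive full subcategory (closed under isomorphisms) which is closed under
direct summands -/
structure AdditiveClosed (S : Set D) : Prop where
  iso : isoClosed D S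
  zero : ∀ Z : D, IsZero Z → Z ∈ S
  sum : ∀ A ∈ S, ∀ B ∈ S, (A ⊞ B) ∈ S
  summand : ∀ A ∈ S, ∀ (X : D) (i : X ⟶ A) (p : A ⟶ X), i ≫ p = 𝟙 X → X ∈ S

/-- a torsion pair `(U, V)` in the triangulated category `D` -/
structure IsTorsionPair (U V : Set D) : Prop where
  addU : AdditiveClosed D U
  addV : AdditiveClosed D V
  hom_zero : homZero D U V
  cover : ∀ A : D, A ∈ starSet D U V

/-- `t₁ ≼ t₂` for torsion pairs in a triangulated category: `U₁ ⊆ U₂` and `U₁[1] ⊆ U₂`. -/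
def torsLE (U₁ U₂ : Set D) : Prop :=
  U₁ ⊆ U₂ ∧ shiftSet D U₁ 1 ⊆ U₂

/-- a torsion pair `(T, F)` in an (extension-closed) full subcategory `H` of `D`:
`T` and `F` are additive subcategories of `H` closed under direct summands,
`Hom(T, F) = 0`, and every object of `H` admits a distinguished triangle
`T → X → F → T[1]` with `T ∈ 𝒯`, `F ∈ ℱ`. -/
structure IsTorsionPairIn (H T F : Set D) : Prop where
  subT : T ⊆ H
  subF : F ⊆ H
  isoT : ∀ ⦃A B : D⦄, (A ≅ B) → A ∈ T → B ∈ H → B ∈ T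
  isoF : ∀ ⦃A B : D⦄, (A ≅ B) → A ∈ F → B ∈ H → B ∈ F
  zeroT : ∀ Z : D, IsZero Z → Z ∈ H → Z ∈ T
  zeroF : ∀ Z : D, IsZero Z → Z ∈ H → Z ∈ F
  sumT : ∀ A ∈ T, ∀ B ∈ T, (A ⊞ B) ∈ T
  sumF : ∀ A ∈ F, ∀ B ∈ F, (A ⊞ B) ∈ F
  summandT : ∀ A ∈ T, ∀ (X : D) (i : X ⟶ A) (p : A ⟶ X), i ≫ p = 𝟙 X → X ∈ H → X ∈ T
  summandF : ∀ A ∈ F, ∀ (X : D) (i : X ⟶ A) (p : A ⟶ X), i ≫ p = 𝟙 X → X ∈ H → X ∈ F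
  hom_zero : homZero D T F
  cover : ∀ A ∈ H, A ∈ starSet D T F

/-- an `s`-torsion pair in `H`: a torsion pair with moreover `Hom(T, F[-1]) = 0`. -/
structure IsSTorsionPairIn (H T F : Set D) extends IsTorsionPairIn D H T F : Prop where
  neg_hom_zero : ∀ A ∈ T, ∀ B ∈ F, ∀ f : A ⟶ B⟦(-1 : ℤ)⟧, f = 0

/-- the relation `≼` for torsion pairs in a subcategory `H`:
`Hom(T, F') = 0` and `Hom(T, F'[-1]) = 0`. -/
def torsLEIn (T F' : Set D) : Prop :=
  homZero D T F' ∧ homZero D T (shiftSet D F' (-1))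

/-- a `t`-structure `(L, G) = (S^{≤0}, S^{≥0})` on a triangulated (full) subcategory `S`
of `D` (take `S = Set.univ` for a `t`-structure on `D` itself). -/
structure IsTStructureOn (S L G : Set D) : Prop where
  subL : L ⊆ S
  subG : G ⊆ S
  isoL : ∀ ⦃A B : D⦄, (A ≅ B) → A ∈ L → B ∈ S → B ∈ L
  isoG : ∀ ⦃A B : D⦄, (A ≅ B) → A ∈ G → B ∈ S → B ∈ G
  hom_zero : homZero D L (shiftSet D G (-1))
  cover : ∀ A ∈ S, A ∈ starSet D L (shiftSet D G (-1))
  shiftL : L ⊆ shiftSet D L (-1)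
  shiftG : shiftSet D G (-1) ⊆ G

/-- a `t`-structure `(L, G) = (D^{≤0}, D^{≥0})` on `D`. -/
def IsTStructure (L G : Set D) : Prop := IsTStructureOn D Set.univ L G

/-- a triangulated full subcategory of `D`. -/
structure IsTriangulatedSub (S : Set D) : Prop where
  iso : isoClosed D S
  zero : ∀ Z : D, IsZero Z → Z ∈ S
  shift : ∀ (n : ℤ), ∀ A ∈ S, A⟦n⟧ ∈ S
  ext₂ : ∀ (T : Triangle D), (T ∈ distTriang D) → T.obj₁ ∈ S → T.obj₃ ∈ S → T.obj₂ ∈ S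

/-- an `m`-extended heart on `D`: a full subcategory of the form
`V^{≥ -(m-1)} ∩ V^{≤ 0}` for some `t`-structure `(V^{≤0}, V^{≥0})` on `D`. -/
def IsExtendedHeart (m : ℤ) (E : Set D) : Prop :=
  ∃ L G : Set D, IsTStructure D L G ∧ E = shiftSet D G (m - 1) ∩ L

/-- the relation `E₁ ≤ E₂` for `m`-extended hearts:
`E₁ ⊆ E₂[m] * E₂` and `E₂ ⊆ E₁ * E₁[-m]`. -/
def extHeartLE (m : ℤ) (E₁ E₂ : Set D) : Prop :=
  E₁ ⊆ starSet D (shiftSet D E₂ m) E₂ ∧ E₂ ⊆ starSet D E₁ (shiftSet D E₁ (-m))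

/-! Both classes of a torsion pair are closed under extensions, and `𝒰₁ ⊆ 𝒰₂`, `𝒰₁[1] ⊆ 𝒰₂`
give `𝒱₂ ⊆ 𝒱₁`, `𝒱₂[-1] ⊆ 𝒱₁`. If `u → A → v → u⟦1⟧` is the `t₁`-triangle of `A ∈ 𝒰₂`, its
rotation `A → v → u⟦1⟧` shows `v ∈ 𝒰₂`; dually, if `u → B → v → u⟦1⟧` is the `t₂`-triangle of
`B ∈ 𝒱₁`, the inverse rotation `v⟦-1⟧ → u → B` shows `u ∈ 𝒱₁`. The reverse inclusions are
extension closure. -/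

namespace IsTorsionPair

variable {D} {U V : Set D}

lemma mem_left_of_forall_hom_eq_zero (t : IsTorsionPair D U V) {A : D}
    (h : ∀ B ∈ V, ∀ f : A ⟶ B, f = 0) : A ∈ U := by
  obtain ⟨u, v, f, g, _, hu, hv, hT⟩ := t.cover A
  obtain ⟨s, hs⟩ := Triangle.coyoneda_exact₂ _ hT (𝟙 A) (by rw [h v hv g]; exact comp_zero)
  exact t.addU.summand u hu A s f hs.symm

lemma mem_right_of_forall_hom_eq_zero (t : IsTorsionPair D U V) {A : D}
    (h : ∀ B ∈ U, ∀ f : B ⟶ A, f = 0) : A ∈ V := by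
  obtain ⟨u, v, f, g, _, hu, hv, hT⟩ := t.cover A
  obtain ⟨s, hs⟩ := Triangle.yoneda_exact₂ _ hT (𝟙 A) (by rw [h u hu f]; exact zero_comp)
  exact t.addV.summand v hv A g s hs.symm

lemma obj₂_mem_left (t : IsTorsionPair D U V) {T : Triangle D} (hT : T ∈ distTriang D)
    (h₁ : T.obj₁ ∈ U) (h₃ : T.obj₃ ∈ U) : T.obj₂ ∈ U := by
  refine t.mem_left_of_forall_hom_eq_zero fun B hB φ => ?_
  obtain ⟨ψ, rfl⟩ := Triangle.yoneda_exact₂ _ hT φ (t.hom_zero _ h₁ B hB _)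
  rw [t.hom_zero _ h₃ B hB ψ, comp_zero]

lemma obj₂_mem_right (t : IsTorsionPair D U V) {T : Triangle D} (hT : T ∈ distTriang D)
    (h₁ : T.obj₁ ∈ V) (h₃ : T.obj₃ ∈ V) : T.obj₂ ∈ V := by
  refine t.mem_right_of_forall_hom_eq_zero fun A hA φ => ?_
  obtain ⟨ψ, rfl⟩ := Triangle.coyoneda_exact₂ _ hT φ (t.hom_zero A hA _ h₃ _)
  rw [t.hom_zero A hA _ h₁ ψ, zero_comp]

variable {U₁ V₁ U₂ V₂ : Set D}

lemma right_subset_of_left_subset (t₁ : IsTorsionPair D U₁ V₁) (t₂ : IsTorsionPair D U₂ V₂)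
    (hU : U₁ ⊆ U₂) : V₂ ⊆ V₁ :=
  fun _ hB => t₁.mem_right_of_forall_hom_eq_zero fun A hA => t₂.hom_zero A (hU hA) _ hB

lemma shift_neg_one_mem_right (t₁ : IsTorsionPair D U₁ V₁) (t₂ : IsTorsionPair D U₂ V₂)
    (hU : shiftSet D U₁ 1 ⊆ U₂) {B : D} (hB : B ∈ V₂) : B⟦(-1 : ℤ)⟧ ∈ V₁ := by
  refine t₁.mem_right_of_forall_hom_eq_zero fun A hA φ => ?_
  rw [← (shiftFunctor D (1 : ℤ)).map_eq_zero_iff,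
    ← Preadditive.IsIso.comp_right_eq_zero _
      ((shiftFunctorCompIsoId D (-1 : ℤ) 1 (by simp)).hom.app B)]
  exact t₂.hom_zero _ (hU ⟨A, hA, ⟨Iso.refl _⟩⟩) B hB _

end IsTorsionPair

/-- Lemma 3.1 in the triangulated case: if `t₁ ≼ t₂`, then
`𝒰₂ = 𝒰₁ * (𝒰₂ ∩ 𝒱₁)` and `𝒱₁ = (𝒰₂ ∩ 𝒱₁) * 𝒱₂`. -/
theorem stmt0 (U₁ V₁ U₂ V₂ : Set D)
    (t₁ : IsTorsionPair D U₁ V₁) (t₂ : IsTorsionPair D U₂ V₂)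
    (hle : torsLE D U₁ U₂) :
    U₂ = starSet D U₁ (U₂ ∩ V₁) ∧ V₁ = starSet D (U₂ ∩ V₁) V₂ := by
  obtain ⟨hU, hU_shift⟩ := hle
  refine ⟨Set.Subset.antisymm ?_ ?_, Set.Subset.antisymm ?_ ?_⟩
  · intro A hA
    obtain ⟨u, v, f, g, h, hu, hv, hT⟩ := t₁.cover A
    have hvU₂ : v ∈ U₂ :=
      t₂.obj₂_mem_left (rot_of_distTriang _ hT) hA (hU_shift ⟨u, hu, ⟨Iso.refl _⟩⟩)
    exact ⟨u, v, f, g, h, hu, ⟨hvU₂, hv⟩, hT⟩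
  · rintro A ⟨u, c, f, g, h, hu, ⟨hc, -⟩, hT⟩
    exact t₂.obj₂_mem_left hT (hU hu) hc
  · intro B hB
    obtain ⟨u, v, f, g, h, hu, hv, hT⟩ := t₂.cover B
    have huV₁ : u ∈ V₁ :=
      t₁.obj₂_mem_right (inv_rot_of_distTriang _ hT)
        (t₁.shift_neg_one_mem_right t₂ hU_shift hv) hB
    exact ⟨u, v, f, g, h, ⟨hu, huV₁⟩, hv, hT⟩
  · rintro B ⟨c, v, f, g, h, ⟨-, hc⟩, hv, hT⟩
    exact t₁.obj₂_mem_right hT hc (t₁.right_subset_of_left_subset t₂ hU hv)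
end

section
/- Let D be a triangulated category and let t1 = (𝒰1,𝒱1), t2 = (𝒰2,𝒱2) be torsion pairs in D with t1 ≼ t2, and set ℋ = 𝒰2 ∩ 𝒱1. Then the assignments Φ(𝒰,𝒱) = (𝒰 ∩ 𝒱1, 𝒱 ∩ 𝒰2) and Ψ(𝒯,ℱ) = (𝒰1 * 𝒯, ℱ * 𝒱2) are mutually inverse, order preserving bijections between the set of torsion pairs t = (𝒰,𝒱) in D with t1 ≼ t ≼ t2 and the set of torsion pairs (𝒯,ℱ) in ℋ satisfying 𝒯[1] ⊆ 𝒰2 and ℱ[-1] ⊆ 𝒱1. -/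
open CategoryTheory Category Limits Pretriangulated

universe v u

variable (D : Type u) [Category.{v} D] [Preadditive D] [HasZeroObject D]
  [HasShift D ℤ] [∀ n : ℤ, (shiftFunctor D n).Additive]
  [Pretriangulated D] [HasBinaryBiproducts D]

/-!
Both classes of a torsion pair are perpendicular classes, `𝒰 = ⊥𝒱` and `𝒱 = 𝒰⊥`, and for
`t₁ ≼ t ≼ t₂` the triangles of `t` restrict to `ℋ`, which gives `Φ`. For `Ψ` the point is
`𝒰₁ * 𝒯 = ⊥(ℱ ∪ 𝒱₂)` and `ℱ * 𝒱₂ = (𝒰₁ ∪ 𝒯)⊥`, which makes both classes additive and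
`Φ ∘ Ψ = id` immediate. The decomposition of an object `A` comes from its `t₁`-triangle
`U → A → W`, the `t₂`-triangle `W' → W → V'` and the `(𝒯, ℱ)`-triangle `T₀ → W' → F₀`:
pulling the first triangle back along `T₀ → W` gives `X ∈ 𝒰₁ * 𝒯` with a map `X → A` whose
cone is right perpendicular to `𝒰₁ ∪ 𝒯`. As `D` is only pretriangulated (no octahedral
axiom), this is checked on `Hom(P, -)` rather than by identifying the cone.
-/

section Perp

variable {C : Type*} [Category C] [HasZeroMorphisms C]

def leftPerp (S : Set C) : Set C := {A | ∀ B ∈ S, ∀ f : A ⟶ B, f = 0}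

def rightPerp (S : Set C) : Set C := {B | ∀ A ∈ S, ∀ f : A ⟶ B, f = 0}

lemma leftPerp_anti {S S' : Set C} (h : S ⊆ S') : leftPerp S' ⊆ leftPerp S :=
  fun _ hA B hB => hA B (h hB)

lemma rightPerp_anti {S S' : Set C} (h : S ⊆ S') : rightPerp S' ⊆ rightPerp S :=
  fun _ hB A hA => hB A (h hA)

lemma subset_leftPerp_iff_subset_rightPerp {X Y : Set C} :
    X ⊆ leftPerp Y ↔ Y ⊆ rightPerp X :=
  ⟨fun h _ hB _ hA => h hA _ hB, fun h _ hA _ hB => h hB _ hA⟩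

end Perp

lemma forall_shift_one_hom_eq_zero_iff {C : Type*} [Category C] [Preadditive C]
    [HasShift C ℤ] [∀ n : ℤ, (shiftFunctor C n).Additive] (A B : C) :
    (∀ f : A⟦(1 : ℤ)⟧ ⟶ B, f = 0) ↔ ∀ g : A ⟶ B⟦(-1 : ℤ)⟧, g = 0 := by
  let e := (shiftEquiv C (1 : ℤ)).toAdjunction.homEquiv A B
  have he : e 0 = 0 := by simp [e, Adjunction.homEquiv_unit]
  exact e.forall_congr fun f => ⟨fun hf => hf ▸ he, fun hf => e.injective (hf.trans he.symm)⟩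

section ShiftSet

variable {C : Type*} [Category C] [HasShift C ℤ]

lemma mem_shiftSet {S : Set C} {A : C} (hA : A ∈ S) (n : ℤ) : A⟦n⟧ ∈ shiftSet C S n :=
  ⟨A, hA, ⟨Iso.refl _⟩⟩

lemma shiftSet_mono {S S' : Set C} (h : S ⊆ S') (n : ℤ) : shiftSet C S n ⊆ shiftSet C S' n :=
  fun _ ⟨B, hB, e⟩ => ⟨B, h hB, e⟩

lemma shiftSet_union (S S' : Set C) (n : ℤ) :
    shiftSet C (S ∪ S') n = shiftSet C S n ∪ shiftSet C S' n := by
  ext A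
  simp only [shiftSet, Set.mem_union, Set.mem_ofPred_eq, or_and_right, exists_or]

end ShiftSet

section HomZero

variable {C : Type*} [Category C] [Preadditive C]

lemma homZero_iff_subset_rightPerp {X Y : Set C} : homZero C X Y ↔ Y ⊆ rightPerp X :=
  subset_leftPerp_iff_subset_rightPerp

variable [HasShift C ℤ]

lemma homZero_shiftSet_left_iff {X Y : Set C} {n : ℤ} :
    homZero C (shiftSet C X n) Y ↔ ∀ A ∈ X, ∀ B ∈ Y, ∀ f : A⟦n⟧ ⟶ B, f = 0 := by
  refine ⟨fun h A hA => h _ (mem_shiftSet hA n), ?_⟩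
  rintro h _ ⟨A, hA, ⟨e⟩⟩ B hB f
  rw [← cancel_epi e.inv, comp_zero]
  exact h A hA B hB _

lemma homZero_shiftSet_right_iff {X Y : Set C} {n : ℤ} :
    homZero C X (shiftSet C Y n) ↔ ∀ A ∈ X, ∀ B ∈ Y, ∀ f : A ⟶ B⟦n⟧, f = 0 := by
  refine ⟨fun h A hA B hB => h A hA _ (mem_shiftSet hB n), ?_⟩
  rintro h A hA _ ⟨B, hB, ⟨e⟩⟩ f
  rw [← cancel_mono e.hom, zero_comp]
  exact h A hA B hB _

lemma homZero_shiftSet_one_iff [∀ n : ℤ, (shiftFunctor C n).Additive] {X Y : Set C} :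
    homZero C (shiftSet C X 1) Y ↔ homZero C X (shiftSet C Y (-1)) := by
  rw [homZero_shiftSet_left_iff, homZero_shiftSet_right_iff]
  exact forall₂_congr fun A _ => forall₂_congr fun B _ => forall_shift_one_hom_eq_zero_iff A B

end HomZero

section ConeOrthogonal

variable {C : Type*} [Category C] [HasZeroMorphisms C] [HasShift C ℤ]

/-- For `φ` the first morphism of a distinguished triangle this says that `P` has only zero maps
to the cone (`coneOrthogonal_iff`), but it does not refer to a choice of cone, which makes it
stable under composition. -/
structure ConeOrthogonal (P : C) {X A : C} (φ : X ⟶ A) : Prop where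
  exists_lift : ∀ η : P ⟶ A, ∃ ζ : P ⟶ X, ζ ≫ φ = η
  eq_zero_of_comp_shift : ∀ ρ : P ⟶ X⟦(1 : ℤ)⟧, ρ ≫ φ⟦(1 : ℤ)⟧' = 0 → ρ = 0

lemma ConeOrthogonal.comp {P X Y Z : C} {φ : X ⟶ Y} {ψ : Y ⟶ Z} (hφ : ConeOrthogonal P φ)
    (hψ : ConeOrthogonal P ψ) : ConeOrthogonal P (φ ≫ ψ) where
  exists_lift η := by
    obtain ⟨ζ₁, rfl⟩ := hψ.exists_lift η
    obtain ⟨ζ, rfl⟩ := hφ.exists_lift ζ₁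
    exact ⟨ζ, (assoc _ _ _).symm⟩
  eq_zero_of_comp_shift ρ hρ := hφ.eq_zero_of_comp_shift ρ
    (hψ.eq_zero_of_comp_shift _ (by rwa [assoc, ← Functor.map_comp]))

end ConeOrthogonal

section Pretriangulated

variable {C : Type*} [Category C] [Preadditive C] [HasZeroObject C] [HasShift C ℤ]
  [∀ n : ℤ, (shiftFunctor C n).Additive] [Pretriangulated C]

lemma obj₃_mem_leftPerp {S : Set C} {T : Triangle C} (hT : T ∈ distTriang C)
    (h₂ : T.obj₂ ∈ leftPerp S) (h₁ : T.obj₁⟦(1 : ℤ)⟧ ∈ leftPerp S) : T.obj₃ ∈ leftPerp S := by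
  intro B hB κ
  obtain ⟨ψ, rfl⟩ := Triangle.yoneda_exact₃ _ hT κ (h₂ B hB _)
  rw [h₁ B hB ψ, comp_zero]

lemma coneOrthogonal_iff {P : C} {T : Triangle C} (hT : T ∈ distTriang C) :
    ConeOrthogonal P T.mor₁ ↔ ∀ f : P ⟶ T.obj₃, f = 0 := by
  have h₁₂ := comp_distTriang_mor_zero₁₂ _ hT
  have h₃₁ := comp_distTriang_mor_zero₃₁ _ hT
  refine ⟨fun hφ f => ?_, fun hY => ⟨fun η => ?_, fun ρ hρ => ?_⟩⟩
  · obtain ⟨η, rfl⟩ := Triangle.coyoneda_exact₃ _ hT f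
      (hφ.eq_zero_of_comp_shift _ (by rw [assoc, h₃₁, comp_zero]))
    obtain ⟨ζ, rfl⟩ := hφ.exists_lift η
    rw [assoc, h₁₂, comp_zero]
  · obtain ⟨ζ, hζ⟩ := Triangle.coyoneda_exact₂ _ hT η (hY _)
    exact ⟨ζ, hζ.symm⟩
  · obtain ⟨ψ, rfl⟩ := Triangle.coyoneda_exact₁ _ hT ρ hρ
    rw [hY ψ, zero_comp]

/-- The first triangle is the pullback of the second along `m`, and `(𝟙, φ, m)` is a morphism
between them. -/
lemma ConeOrthogonal.of_triangle_hom {P U X Z A W : C} {x : U ⟶ X} {y : X ⟶ Z}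
    {a : U ⟶ A} {b : A ⟶ W} {δ : W ⟶ U⟦(1 : ℤ)⟧} {m : Z ⟶ W} {φ : X ⟶ A}
    (hX : Triangle.mk x y (m ≫ δ) ∈ distTriang C) (hA : Triangle.mk a b δ ∈ distTriang C)
    (hxφ : x ≫ φ = a) (hφ : y ≫ m = φ ≫ b) (hm : ConeOrthogonal P m) :
    ConeOrthogonal P φ where
  exists_lift η := by
    have hbδ : b ≫ δ = 0 := comp_distTriang_mor_zero₂₃ _ hA
    obtain ⟨ζ₁, hζ₁⟩ := hm.exists_lift (η ≫ b)
    have h₃ : ζ₁ ≫ m ≫ δ = 0 := by rw [← assoc, hζ₁, assoc, hbδ, comp_zero]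
    obtain ⟨ζ, rfl⟩ : ∃ ζ : P ⟶ X, ζ₁ = ζ ≫ y := Triangle.coyoneda_exact₃ _ hX ζ₁ h₃
    have h₂ : (η - ζ ≫ φ) ≫ b = 0 := by
      rw [Preadditive.sub_comp, ← hζ₁, assoc, assoc, hφ, sub_self]
    obtain ⟨σ, hσ⟩ : ∃ σ : P ⟶ U, η - ζ ≫ φ = σ ≫ a := Triangle.coyoneda_exact₂ _ hA _ h₂
    exact ⟨σ ≫ x + ζ, by rw [Preadditive.add_comp, assoc, hxφ, ← hσ, sub_add_cancel]⟩
  eq_zero_of_comp_shift ρ hρ := by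
    have hy : ρ ≫ y⟦(1 : ℤ)⟧' = 0 := hm.eq_zero_of_comp_shift _ (by
      rw [assoc, ← Functor.map_comp, hφ, Functor.map_comp, ← assoc, hρ, zero_comp])
    obtain ⟨ρ₃, rfl⟩ : ∃ ρ₃ : P ⟶ U⟦(1 : ℤ)⟧, ρ = ρ₃ ≫ (-(x⟦(1 : ℤ)⟧')) :=
      Triangle.coyoneda_exact₁ _ (rot_of_distTriang _ hX) ρ hy
    have ha : ρ₃ ≫ a⟦(1 : ℤ)⟧' = 0 := by
      rw [← hxφ]
      simpa using hρ
    obtain ⟨ρ₄, rfl⟩ : ∃ ρ₄ : P ⟶ W, ρ₃ = ρ₄ ≫ δ := Triangle.coyoneda_exact₁ _ hA ρ₃ ha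
    obtain ⟨ζ, rfl⟩ := hm.exists_lift ρ₄
    have h₃₁ : (m ≫ δ) ≫ x⟦(1 : ℤ)⟧' = 0 := comp_distTriang_mor_zero₃₁ _ hX
    simp only [assoc, Preadditive.comp_neg]
    rw [← assoc m, h₃₁, comp_zero, neg_zero]

lemma obj₁_mem_rightPerp {S : Set C} {T : Triangle C} (hT : T ∈ distTriang C)
    (h₂ : T.obj₂ ∈ rightPerp S) (h₃ : T.obj₃ ∈ rightPerp (shiftSet C S 1)) :
    T.obj₁ ∈ rightPerp S := by
  intro P hP κ
  obtain ⟨ψ, hψ⟩ := Triangle.coyoneda_exact₁ _ hT (κ⟦(1 : ℤ)⟧')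
    (by rw [← Functor.map_comp, h₂ P hP (κ ≫ T.mor₁), Functor.map_zero])
  apply (shiftFunctor C (1 : ℤ)).map_injective
  rw [hψ, h₃ _ (mem_shiftSet hP 1) ψ, zero_comp, Functor.map_zero]

lemma starSet_subset_leftPerp {X Y S : Set C} (hX : X ⊆ leftPerp S) (hY : Y ⊆ leftPerp S) :
    starSet C X Y ⊆ leftPerp S := by
  rintro A ⟨B, B', u, v, w, hB, hB', hT⟩ Z hZ f
  obtain ⟨ψ, rfl⟩ : ∃ ψ : B' ⟶ Z, f = v ≫ ψ :=
    Triangle.yoneda_exact₂ _ hT f (hX hB Z hZ _)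
  rw [hY hB' Z hZ ψ, comp_zero]

lemma starSet_subset_rightPerp {X Y S : Set C} (hX : X ⊆ rightPerp S)
    (hY : Y ⊆ rightPerp S) : starSet C X Y ⊆ rightPerp S := by
  rintro A ⟨B, B', u, v, w, hB, hB', hT⟩ P hP f
  obtain ⟨ψ, rfl⟩ : ∃ ψ : P ⟶ B, f = ψ ≫ u :=
    Triangle.coyoneda_exact₂ _ hT f (hY hB' P hP _)
  rw [hX hB P hP ψ, zero_comp]

lemma exists_retract_of_mem_starSet_of_mem_leftPerp {X Y : Set C} {A : C}
    (hA : A ∈ starSet C X Y) (hAY : A ∈ leftPerp Y) : ∃ B ∈ X, Nonempty (Retract A B) := by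
  obtain ⟨B, B', u, v, w, hB, hB', hT⟩ := hA
  obtain ⟨s, hs⟩ := Triangle.coyoneda_exact₂ _ hT (𝟙 A) (hAY B' hB' _)
  exact ⟨B, hB, ⟨⟨s, u, hs.symm⟩⟩⟩

lemma exists_retract_of_mem_starSet_of_mem_rightPerp {X Y : Set C} {A : C}
    (hA : A ∈ starSet C X Y) (hXA : A ∈ rightPerp X) : ∃ B ∈ Y, Nonempty (Retract A B) := by
  obtain ⟨B, B', u, v, w, hB, hB', hT⟩ := hA
  obtain ⟨s, hs⟩ := Triangle.yoneda_exact₂ _ hT (𝟙 A) (hXA B hB _)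
  exact ⟨B', hB', ⟨⟨v, s, hs.symm⟩⟩⟩

lemma shiftSet_starSet_subset_leftPerp {X Y S : Set C} (hX : shiftSet C X 1 ⊆ leftPerp S)
    (hY : shiftSet C Y 1 ⊆ leftPerp S) : shiftSet C (starSet C X Y) 1 ⊆ leftPerp S :=
  homZero_shiftSet_one_iff.2 <| starSet_subset_leftPerp
    (homZero_shiftSet_one_iff.1 hX) (homZero_shiftSet_one_iff.1 hY)

end Pretriangulated

section AdditiveClosed

variable {C : Type*} [Category C] [Preadditive C] [HasBinaryBiproducts C]

lemma additiveClosed_leftPerp (S : Set C) : AdditiveClosed C (leftPerp S) where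
  iso _ _ e hA B hB f := by
    rw [← cancel_epi e.hom, comp_zero]
    exact hA B hB _
  zero Z hZ _ _ f := hZ.eq_of_src f 0
  sum A hA A' hA' B hB f := biprod.hom_ext' _ _
    (by rw [comp_zero]; exact hA B hB _) (by rw [comp_zero]; exact hA' B hB _)
  summand A hA X i p hip B hB f := by
    rw [← id_comp f, ← hip, assoc, hA B hB (p ≫ f), comp_zero]

lemma additiveClosed_rightPerp (S : Set C) : AdditiveClosed C (rightPerp S) where
  iso _ _ e hB A hA f := by
    rw [← cancel_mono e.inv, zero_comp]
    exact hB A hA _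
  zero Z hZ _ _ f := hZ.eq_of_tgt f 0
  sum B hB B' hB' A hA f := biprod.hom_ext _ _
    (by rw [zero_comp]; exact hB A hA _) (by rw [zero_comp]; exact hB' A hA _)
  summand B hB X i p hip A hA f := by
    rw [← comp_id f, ← hip, ← assoc, hB A hA (f ≫ i), zero_comp]

lemma AdditiveClosed.inter {S S' : Set C} (h : AdditiveClosed C S) (h' : AdditiveClosed C S') :
    AdditiveClosed C (S ∩ S') where
  iso _ _ e hA := ⟨h.iso e hA.1, h'.iso e hA.2⟩
  zero Z hZ := ⟨h.zero Z hZ, h'.zero Z hZ⟩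
  sum A hA B hB := ⟨h.sum A hA.1 B hB.1, h'.sum A hA.2 B hB.2⟩
  summand A hA X i p hip := ⟨h.summand A hA.1 X i p hip, h'.summand A hA.2 X i p hip⟩

end AdditiveClosed

section TorsionPair

variable {C : Type*} [Category C] [Preadditive C] [HasZeroObject C] [HasShift C ℤ]
  [∀ n : ℤ, (shiftFunctor C n).Additive] [Pretriangulated C] [HasBinaryBiproducts C]

lemma IsTorsionPairIn.of_additiveClosed {H T F : Set C} (hT : T ⊆ H) (hF : F ⊆ H)
    (aT : AdditiveClosed C T) (aF : AdditiveClosed C F) (h₀ : homZero C T F)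
    (cover : ∀ A ∈ H, A ∈ starSet C T F) : IsTorsionPairIn C H T F where
  subT := hT
  subF := hF
  isoT _ _ e hA _ := aT.iso e hA
  isoF _ _ e hA _ := aF.iso e hA
  zeroT Z hZ _ := aT.zero Z hZ
  zeroF Z hZ _ := aF.zero Z hZ
  sumT := aT.sum
  sumF := aF.sum
  summandT A hA X i p hip _ := aT.summand A hA X i p hip
  summandF A hA X i p hip _ := aF.summand A hA X i p hip
  hom_zero := h₀
  cover := cover

namespace IsTorsionPairIn

variable {H T F : Set C}

lemma mem_left_of_mem_leftPerp (hTF : IsTorsionPairIn C H T F) {A : C} (hA : A ∈ H)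
    (hAF : A ∈ leftPerp F) : A ∈ T := by
  obtain ⟨B, hB, ⟨r⟩⟩ := exists_retract_of_mem_starSet_of_mem_leftPerp (hTF.cover A hA) hAF
  exact hTF.summandT B hB A r.i r.r r.retract hA

lemma mem_right_of_mem_rightPerp (hTF : IsTorsionPairIn C H T F) {A : C} (hA : A ∈ H)
    (hTA : A ∈ rightPerp T) : A ∈ F := by
  obtain ⟨B, hB, ⟨r⟩⟩ := exists_retract_of_mem_starSet_of_mem_rightPerp (hTF.cover A hA) hTA
  exact hTF.summandF B hB A r.i r.r r.retract hA

end IsTorsionPairIn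

namespace IsTorsionPair

variable {U V : Set C}

lemma subset_leftPerp (t : IsTorsionPair C U V) : U ⊆ leftPerp V := t.hom_zero

lemma subset_rightPerp (t : IsTorsionPair C U V) : V ⊆ rightPerp U :=
  homZero_iff_subset_rightPerp.1 t.hom_zero

lemma leftPerp_eq (t : IsTorsionPair C U V) : leftPerp V = U := by
  refine Set.Subset.antisymm (fun A hA => ?_) t.subset_leftPerp
  obtain ⟨B, hB, ⟨r⟩⟩ := exists_retract_of_mem_starSet_of_mem_leftPerp (t.cover A) hA
  exact t.addU.summand B hB A r.i r.r r.retract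

lemma rightPerp_eq (t : IsTorsionPair C U V) : rightPerp U = V := by
  refine Set.Subset.antisymm (fun A hA => ?_) t.subset_rightPerp
  obtain ⟨B, hB, ⟨r⟩⟩ := exists_retract_of_mem_starSet_of_mem_rightPerp (t.cover A) hA
  exact t.addV.summand B hB A r.i r.r r.retract

lemma right_subset_rightPerp (t : IsTorsionPair C U V) {S : Set C} (hS : S ⊆ U) :
    V ⊆ rightPerp S :=
  t.subset_rightPerp.trans (rightPerp_anti hS)

lemma right_anti (t : IsTorsionPair C U V) {U' V' : Set C} (t' : IsTorsionPair C U' V')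
    (h : U ⊆ U') : V' ⊆ V :=
  t.rightPerp_eq ▸ t'.right_subset_rightPerp h

lemma starSet_subset_left (t : IsTorsionPair C U V) {X Y : Set C} (hX : X ⊆ U) (hY : Y ⊆ U) :
    starSet C X Y ⊆ U :=
  t.leftPerp_eq ▸ starSet_subset_leftPerp (hX.trans t.subset_leftPerp)
    (hY.trans t.subset_leftPerp)

lemma starSet_subset_right (t : IsTorsionPair C U V) {X Y : Set C} (hX : X ⊆ V) (hY : Y ⊆ V) :
    starSet C X Y ⊆ V :=
  t.rightPerp_eq ▸ starSet_subset_rightPerp (hX.trans t.subset_rightPerp)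
    (hY.trans t.subset_rightPerp)

lemma mem_starSet_of_mem_leftPerp (t : IsTorsionPair C U V) {S T : Set C}
    (hS : shiftSet C U 1 ⊆ leftPerp S) (hT : V ∩ leftPerp S ⊆ T) {A : C}
    (hA : A ∈ leftPerp S) : A ∈ starSet C U T := by
  obtain ⟨X, Y, f, g, h, hX, hY, hXAY⟩ := t.cover A
  exact ⟨X, Y, f, g, h, hX, hT ⟨hY, obj₃_mem_leftPerp hXAY hA (hS (mem_shiftSet hX 1))⟩, hXAY⟩

lemma mem_starSet_of_mem_rightPerp (t : IsTorsionPair C U V) {S F : Set C}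
    (hS : shiftSet C S 1 ⊆ U) (hF : U ∩ rightPerp S ⊆ F) {A : C}
    (hA : A ∈ rightPerp S) : A ∈ starSet C F V := by
  obtain ⟨X, Y, f, g, h, hX, hY, hXAY⟩ := t.cover A
  exact ⟨X, Y, f, g, h, hF ⟨hX, obj₁_mem_rightPerp hXAY hA (t.right_subset_rightPerp hS hY)⟩,
    hY, hXAY⟩

end IsTorsionPair

end TorsionPair

section Interval

variable {C : Type*} [Category C] [Preadditive C] [HasZeroObject C] [HasShift C ℤ]
  [∀ n : ℤ, (shiftFunctor C n).Additive] [Pretriangulated C] [HasBinaryBiproducts C]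
  {U₁ V₁ U₂ V₂ : Set C}

section Phi

variable {U V : Set C}

lemma isTorsionPairIn_inter (t₁ : IsTorsionPair C U₁ V₁) (t₂ : IsTorsionPair C U₂ V₂)
    (t : IsTorsionPair C U V) (h₁ : torsLE C U₁ U) (h₂ : torsLE C U U₂) :
    IsTorsionPairIn C (U₂ ∩ V₁) (U ∩ V₁) (V ∩ U₂) := by
  refine .of_additiveClosed (Set.inter_subset_inter_left _ h₂.1)
    (fun B hB => ⟨hB.2, t₁.right_anti t h₁.1 hB.1⟩) (t.addU.inter t₁.addV)
    (t.addV.inter t₂.addU) (fun A hA B hB => t.hom_zero A hA.1 B hB.1) ?_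
  rintro A ⟨hA₂, hA₁⟩
  obtain ⟨X, Y, f, g, h, hX, hY, hT⟩ := t.cover A
  refine ⟨X, Y, f, g, h, ⟨hX, ?_⟩, ⟨hY, ?_⟩, hT⟩
  · rw [← t₁.rightPerp_eq] at hA₁ ⊢
    exact obj₁_mem_rightPerp hT hA₁ (t.right_subset_rightPerp h₁.2 hY)
  · rw [← t₂.leftPerp_eq] at hA₂ ⊢
    exact obj₃_mem_leftPerp hT hA₂ (t₂.subset_leftPerp (h₂.2 (mem_shiftSet hX 1)))

lemma shiftSet_inter_subset_right (t₁ : IsTorsionPair C U₁ V₁) (t : IsTorsionPair C U V)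
    (h₁ : torsLE C U₁ U) : shiftSet C (V ∩ U₂) (-1) ⊆ V₁ := by
  rw [← t₁.rightPerp_eq, ← subset_leftPerp_iff_subset_rightPerp]
  exact homZero_shiftSet_one_iff.1 fun A hA B hB => t.hom_zero A (h₁.2 hA) B hB.1

lemma starSet_inter_left_eq (t₁ : IsTorsionPair C U₁ V₁) (t : IsTorsionPair C U V)
    (h₁ : torsLE C U₁ U) : starSet C U₁ (U ∩ V₁) = U := by
  refine (t.starSet_subset_left h₁.1 Set.inter_subset_left).antisymm fun A hA => ?_
  refine t₁.mem_starSet_of_mem_leftPerp (t.leftPerp_eq ▸ h₁.2) ?_ (t.subset_leftPerp hA)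
  rintro B ⟨hB₁, hB⟩
  exact ⟨t.leftPerp_eq ▸ hB, hB₁⟩

lemma starSet_inter_right_eq (t₂ : IsTorsionPair C U₂ V₂) (t : IsTorsionPair C U V)
    (h₂ : torsLE C U U₂) : starSet C (V ∩ U₂) V₂ = V := by
  refine (t.starSet_subset_right Set.inter_subset_left (t.right_anti t₂ h₂.1)).antisymm
    fun A hA => ?_
  refine t₂.mem_starSet_of_mem_rightPerp h₂.2 ?_ (t.subset_rightPerp hA)
  rintro B ⟨hB₂, hB⟩
  exact ⟨t.rightPerp_eq ▸ hB, hB₂⟩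

lemma torsLEIn_inter {U' V' : Set C} (t' : IsTorsionPair C U' V') (h : torsLE C U U') :
    torsLEIn C (U ∩ V₁) (V' ∩ U₂) :=
  ⟨fun A hA B hB => t'.hom_zero A (h.1 hA.1) B hB.1,
    homZero_shiftSet_one_iff.1 fun A hA B hB =>
      t'.hom_zero A (((shiftSet_mono Set.inter_subset_left 1).trans h.2) hA) B hB.1⟩

end Phi

section Psi

variable {T F : Set C}

lemma union_subset_leftPerp_union (t₁ : IsTorsionPair C U₁ V₁) (t₂ : IsTorsionPair C U₂ V₂)
    (h : U₁ ⊆ U₂) (hTF : IsTorsionPairIn C (U₂ ∩ V₁) T F) : U₁ ∪ T ⊆ leftPerp (F ∪ V₂) := by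
  rintro A (hA | hA) B (hB | hB)
  · exact t₁.hom_zero A hA B (hTF.subF hB).2
  · exact t₂.hom_zero A (h hA) B hB
  · exact hTF.hom_zero A hA B hB
  · exact t₂.hom_zero A (hTF.subT hA).1 B hB

lemma shiftSet_subset_leftPerp_union (t₁ : IsTorsionPair C U₁ V₁)
    (t₂ : IsTorsionPair C U₂ V₂) (h : shiftSet C U₁ 1 ⊆ U₂) (hF : shiftSet C F (-1) ⊆ V₁) :
    shiftSet C U₁ 1 ⊆ leftPerp (F ∪ V₂) := by
  have hU₁F : homZero C (shiftSet C U₁ 1) F :=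
    homZero_shiftSet_one_iff.2 fun A hA B hB => t₁.hom_zero A hA B (hF hB)
  rintro A hA B (hB | hB)
  · exact hU₁F A hA B hB
  · exact t₂.hom_zero A (h hA) B hB

lemma inter_leftPerp_union_subset (t₂ : IsTorsionPair C U₂ V₂)
    (hTF : IsTorsionPairIn C (U₂ ∩ V₁) T F) : V₁ ∩ leftPerp (F ∪ V₂) ⊆ T :=
  fun _ ⟨hB₁, hB⟩ => hTF.mem_left_of_mem_leftPerp
    ⟨t₂.leftPerp_eq ▸ leftPerp_anti Set.subset_union_right hB, hB₁⟩
    (leftPerp_anti Set.subset_union_left hB)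

lemma inter_rightPerp_union_subset (t₁ : IsTorsionPair C U₁ V₁)
    (hTF : IsTorsionPairIn C (U₂ ∩ V₁) T F) : U₂ ∩ rightPerp (U₁ ∪ T) ⊆ F :=
  fun _ ⟨hB₂, hB⟩ => hTF.mem_right_of_mem_rightPerp
    ⟨hB₂, t₁.rightPerp_eq ▸ rightPerp_anti Set.subset_union_left hB⟩
    (rightPerp_anti Set.subset_union_right hB)

lemma starSet_eq_leftPerp (t₁ : IsTorsionPair C U₁ V₁) (t₂ : IsTorsionPair C U₂ V₂)
    (h₁₂ : torsLE C U₁ U₂) (hTF : IsTorsionPairIn C (U₂ ∩ V₁) T F)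
    (hF : shiftSet C F (-1) ⊆ V₁) : starSet C U₁ T = leftPerp (F ∪ V₂) := by
  have h := union_subset_leftPerp_union t₁ t₂ h₁₂.1 hTF
  refine (starSet_subset_leftPerp (Set.subset_union_left.trans h)
    (Set.subset_union_right.trans h)).antisymm fun A hA => ?_
  exact t₁.mem_starSet_of_mem_leftPerp (shiftSet_subset_leftPerp_union t₁ t₂ h₁₂.2 hF)
    (inter_leftPerp_union_subset t₂ hTF) hA

lemma starSet_eq_rightPerp (t₁ : IsTorsionPair C U₁ V₁) (t₂ : IsTorsionPair C U₂ V₂)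
    (h₁₂ : torsLE C U₁ U₂) (hTF : IsTorsionPairIn C (U₂ ∩ V₁) T F)
    (hT : shiftSet C T 1 ⊆ U₂) : starSet C F V₂ = rightPerp (U₁ ∪ T) := by
  have h := subset_leftPerp_iff_subset_rightPerp.1 (union_subset_leftPerp_union t₁ t₂ h₁₂.1 hTF)
  refine (starSet_subset_rightPerp (Set.subset_union_left.trans h)
    (Set.subset_union_right.trans h)).antisymm fun A hA => ?_
  exact t₂.mem_starSet_of_mem_rightPerp ((shiftSet_union _ _ _).trans_subset
    (Set.union_subset h₁₂.2 hT)) (inter_rightPerp_union_subset t₁ hTF) hA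

lemma mem_starSet_starSet (t₁ : IsTorsionPair C U₁ V₁) (t₂ : IsTorsionPair C U₂ V₂)
    (h₁₂ : torsLE C U₁ U₂) (hTF : IsTorsionPairIn C (U₂ ∩ V₁) T F)
    (hT : shiftSet C T 1 ⊆ U₂) (A : C) : A ∈ starSet C (starSet C U₁ T) (starSet C F V₂) := by
  obtain ⟨U, W, a, b, δ, hU, hW, hUAW⟩ := t₁.cover A
  obtain ⟨W', V', d, e, γ, hW', hV', hW'WV'⟩ := t₂.cover W
  have hW'V₁ : W' ∈ V₁ := by
    rw [← t₁.rightPerp_eq] at hW ⊢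
    exact obj₁_mem_rightPerp hW'WV' hW (t₂.right_subset_rightPerp h₁₂.2 hV')
  obtain ⟨T₀, F₀, g, h, ι, hT₀, hF₀, hT₀W'F₀⟩ := hTF.cover W' ⟨hW', hW'V₁⟩
  obtain ⟨X, x, y, hUXT₀⟩ := distinguished_cocone_triangle₂ ((g ≫ d) ≫ δ)
  have hcomm : ((g ≫ d) ≫ δ) ≫ (𝟙 U)⟦(1 : ℤ)⟧' = (g ≫ d) ≫ δ := by
    rw [CategoryTheory.Functor.map_id, comp_id]
  obtain ⟨φ, hxφ, hφ⟩ :=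
    complete_distinguished_triangle_morphism₂ _ _ hUXT₀ hUAW (𝟙 U) (g ≫ d) hcomm
  obtain ⟨Y, q, r, hXAY⟩ := distinguished_cocone_triangle φ
  refine ⟨X, Y, φ, q, r, ⟨U, T₀, x, y, _, hU, hT₀, hUXT₀⟩, ?_, hXAY⟩
  rw [starSet_eq_rightPerp t₁ t₂ h₁₂ hTF hT]
  intro P hP
  have hP' := union_subset_leftPerp_union t₁ t₂ h₁₂.1 hTF hP
  have hg : ConeOrthogonal P g := (coneOrthogonal_iff hT₀W'F₀).2 (hP' F₀ (.inl hF₀))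
  have hd : ConeOrthogonal P d := (coneOrthogonal_iff hW'WV').2 (hP' V' (.inr hV'))
  exact (coneOrthogonal_iff hXAY).1 ((hg.comp hd).of_triangle_hom hUXT₀ hUAW
    (hxφ.trans (id_comp a)) hφ)

lemma isTorsionPair_starSet (t₁ : IsTorsionPair C U₁ V₁) (t₂ : IsTorsionPair C U₂ V₂)
    (h₁₂ : torsLE C U₁ U₂) (hTF : IsTorsionPairIn C (U₂ ∩ V₁) T F)
    (hT : shiftSet C T 1 ⊆ U₂) (hF : shiftSet C F (-1) ⊆ V₁) :
    IsTorsionPair C (starSet C U₁ T) (starSet C F V₂) := by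
  have hL := starSet_eq_leftPerp t₁ t₂ h₁₂ hTF hF
  have hR := starSet_eq_rightPerp t₁ t₂ h₁₂ hTF hT
  refine ⟨hL ▸ additiveClosed_leftPerp _, hR ▸ additiveClosed_rightPerp _, ?_,
    mem_starSet_starSet t₁ t₂ h₁₂ hTF hT⟩
  have h := subset_leftPerp_iff_subset_rightPerp.1 (subset_refl (leftPerp (F ∪ V₂)))
  rw [homZero_iff_subset_rightPerp, hL]
  exact starSet_subset_rightPerp (Set.subset_union_left.trans h) (Set.subset_union_right.trans h)

lemma torsLE_starSet_left (t₁ : IsTorsionPair C U₁ V₁) (t₂ : IsTorsionPair C U₂ V₂)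
    (h₁₂ : torsLE C U₁ U₂) (hTF : IsTorsionPairIn C (U₂ ∩ V₁) T F)
    (hF : shiftSet C F (-1) ⊆ V₁) : torsLE C U₁ (starSet C U₁ T) := by
  rw [starSet_eq_leftPerp t₁ t₂ h₁₂ hTF hF]
  exact ⟨Set.subset_union_left.trans (union_subset_leftPerp_union t₁ t₂ h₁₂.1 hTF),
    shiftSet_subset_leftPerp_union t₁ t₂ h₁₂.2 hF⟩

lemma torsLE_starSet_right (t₂ : IsTorsionPair C U₂ V₂) (h₁₂ : torsLE C U₁ U₂)
    (hTF : IsTorsionPairIn C (U₂ ∩ V₁) T F) (hT : shiftSet C T 1 ⊆ U₂) :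
    torsLE C (starSet C U₁ T) U₂ :=
  ⟨t₂.starSet_subset_left h₁₂.1 fun _ hA => (hTF.subT hA).1,
    t₂.leftPerp_eq ▸ shiftSet_starSet_subset_leftPerp (h₁₂.2.trans t₂.subset_leftPerp)
      (hT.trans t₂.subset_leftPerp)⟩

lemma starSet_left_inter_eq (t₁ : IsTorsionPair C U₁ V₁) (t₂ : IsTorsionPair C U₂ V₂)
    (h₁₂ : torsLE C U₁ U₂) (hTF : IsTorsionPairIn C (U₂ ∩ V₁) T F)
    (hF : shiftSet C F (-1) ⊆ V₁) : starSet C U₁ T ∩ V₁ = T := by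
  rw [starSet_eq_leftPerp t₁ t₂ h₁₂ hTF hF, Set.inter_comm]
  exact (inter_leftPerp_union_subset t₂ hTF).antisymm fun _ hA =>
    ⟨(hTF.subT hA).2, union_subset_leftPerp_union t₁ t₂ h₁₂.1 hTF (.inr hA)⟩

lemma starSet_right_inter_eq (t₁ : IsTorsionPair C U₁ V₁) (t₂ : IsTorsionPair C U₂ V₂)
    (h₁₂ : torsLE C U₁ U₂) (hTF : IsTorsionPairIn C (U₂ ∩ V₁) T F)
    (hT : shiftSet C T 1 ⊆ U₂) : starSet C F V₂ ∩ U₂ = F := by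
  rw [starSet_eq_rightPerp t₁ t₂ h₁₂ hTF hT, Set.inter_comm]
  exact (inter_rightPerp_union_subset t₁ hTF).antisymm fun _ hB =>
    ⟨(hTF.subF hB).1, subset_leftPerp_iff_subset_rightPerp.1
      (union_subset_leftPerp_union t₁ t₂ h₁₂.1 hTF) (.inl hB)⟩

lemma torsLE_starSet_of_torsLEIn {T' F' : Set C} (t₁ : IsTorsionPair C U₁ V₁)
    (t₂ : IsTorsionPair C U₂ V₂) (h₁₂ : torsLE C U₁ U₂) (hTF : IsTorsionPairIn C (U₂ ∩ V₁) T F)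
    (hTF' : IsTorsionPairIn C (U₂ ∩ V₁) T' F') (hT : shiftSet C T 1 ⊆ U₂)
    (hF' : shiftSet C F' (-1) ⊆ V₁) (hle : torsLEIn C T F') :
    torsLE C (starSet C U₁ T) (starSet C U₁ T') := by
  rw [starSet_eq_leftPerp t₁ t₂ h₁₂ hTF' hF']
  have hT₀ : T ⊆ leftPerp (F' ∪ V₂) := by
    rintro A hA B (hB | hB)
    · exact hle.1 A hA B hB
    · exact t₂.hom_zero A (hTF.subT hA).1 B hB
  have hT₁ : shiftSet C T 1 ⊆ leftPerp (F' ∪ V₂) := by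
    rintro A hA B (hB | hB)
    · exact homZero_shiftSet_one_iff.2 hle.2 A hA B hB
    · exact t₂.hom_zero A (hT hA) B hB
  exact ⟨starSet_subset_leftPerp
      (Set.subset_union_left.trans (union_subset_leftPerp_union t₁ t₂ h₁₂.1 hTF')) hT₀,
    shiftSet_starSet_subset_leftPerp (shiftSet_subset_leftPerp_union t₁ t₂ h₁₂.2 hF') hT₁⟩

end Psi

end Interval

/-- Theorem 3.8 / Corollary 3.10 (1): `Φ(𝒰,𝒱) = (𝒰 ∩ 𝒱₁, 𝒱 ∩ 𝒰₂)`
and `Ψ(𝒯,ℱ) = (𝒰₁ * 𝒯, ℱ * 𝒱₂)` are mutually inverse, order preserving bijections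
between torsion pairs `t` in `D` with `t₁ ≼ t ≼ t₂` and torsion pairs `(𝒯,ℱ)` in
`ℋ = 𝒰₂ ∩ 𝒱₁` with `𝒯[1] ⊆ 𝒰₂` and `ℱ[-1] ⊆ 𝒱₁`. -/
theorem stmt3 (U₁ V₁ U₂ V₂ : Set D)
    (t₁ : IsTorsionPair D U₁ V₁) (t₂ : IsTorsionPair D U₂ V₂)
    (h12 : torsLE D U₁ U₂) :
    -- Φ is well defined and Ψ ∘ Φ = id
    (∀ U V, IsTorsionPair D U V → torsLE D U₁ U → torsLE D U U₂ →
       IsTorsionPairIn D (U₂ ∩ V₁) (U ∩ V₁) (V ∩ U₂) ∧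
       shiftSet D (U ∩ V₁) 1 ⊆ U₂ ∧ shiftSet D (V ∩ U₂) (-1) ⊆ V₁ ∧
       starSet D U₁ (U ∩ V₁) = U ∧ starSet D (V ∩ U₂) V₂ = V) ∧
    -- Ψ is well defined and Φ ∘ Ψ = id
    (∀ T F, IsTorsionPairIn D (U₂ ∩ V₁) T F →
       shiftSet D T 1 ⊆ U₂ → shiftSet D F (-1) ⊆ V₁ →
       IsTorsionPair D (starSet D U₁ T) (starSet D F V₂) ∧
       torsLE D U₁ (starSet D U₁ T) ∧ torsLE D (starSet D U₁ T) U₂ ∧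
       starSet D U₁ T ∩ V₁ = T ∧ starSet D F V₂ ∩ U₂ = F) ∧
    -- Φ preserves the orders
    (∀ U V U' V', IsTorsionPair D U V → IsTorsionPair D U' V' →
       torsLE D U₁ U → torsLE D U U₂ → torsLE D U₁ U' → torsLE D U' U₂ →
       torsLE D U U' → torsLEIn D (U ∩ V₁) (V' ∩ U₂)) ∧
    -- Ψ preserves the orders
    (∀ T F T' F', IsTorsionPairIn D (U₂ ∩ V₁) T F → IsTorsionPairIn D (U₂ ∩ V₁) T' F' →
       shiftSet D T 1 ⊆ U₂ → shiftSet D F (-1) ⊆ V₁ →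
       shiftSet D T' 1 ⊆ U₂ → shiftSet D F' (-1) ⊆ V₁ →
       torsLEIn D T F' → torsLE D (starSet D U₁ T) (starSet D U₁ T')) := by
  refine ⟨fun U V t h₁ h₂ => ⟨isTorsionPairIn_inter t₁ t₂ t h₁ h₂,
      (shiftSet_mono Set.inter_subset_left 1).trans h₂.2, shiftSet_inter_subset_right t₁ t h₁,
      starSet_inter_left_eq t₁ t h₁, starSet_inter_right_eq t₂ t h₂⟩,
    fun T F hTF hT hF => ⟨isTorsionPair_starSet t₁ t₂ h12 hTF hT hF,
      torsLE_starSet_left t₁ t₂ h12 hTF hF, torsLE_starSet_right t₂ h12 hTF hT,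
      starSet_left_inter_eq t₁ t₂ h12 hTF hF, starSet_right_inter_eq t₁ t₂ h12 hTF hT⟩,
    fun _ _ _ _ _ t' _ _ _ _ h => torsLEIn_inter t' h,
    fun _ _ _ _ hTF hTF' hT _ _ hF' hle =>
      torsLE_starSet_of_torsLEIn t₁ t₂ h12 hTF hTF' hT hF' hle⟩
end

section
/- Let D be a triangulated category with two t-structures s1 = (C1^{≤0}, C1^{≥0}) and s2 = (C2^{≤0}, C2^{≥0}) such that C1^{≤0} ⊆ C2^{≤0}, and set ℋ = C2^{≤0} ∩ C1^{≥1}. Then the assignments φ(𝒰,𝒱) = (𝒰 ∩ C1^{≥1}, 𝒱 ∩ C2^{≤0}) and ψ(𝒯,ℱ) = (C1^{≤0} * 𝒯, ℱ * C2^{≥1}) are mutually inverse, order preserving bijections between the poset of torsion pairs (𝒰,𝒱) in D with C1^{≤0} ⊆ 𝒰 ⊆ C2^{≤0} and the poset of torsion pairs in ℋ. -/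
open CategoryTheory Category Limits Pretriangulated

universe v u

variable (D : Type u) [Category.{v} D] [Preadditive D] [HasZeroObject D]
  [HasShift D ℤ] [∀ n : ℤ, (shiftFunctor D n).Additive]
  [Pretriangulated D] [HasBinaryBiproducts D]

/-!
A `t`-structure is determined by orthogonality, `C^{≤0} = ⊥C^{≥1}` and `C^{≥1} = (C^{≤0})^⊥`,
and so is a torsion pair: `𝒰 = ⊥𝒱`, `𝒱 = 𝒰^⊥`. For a torsion pair `(𝒯, ℱ)` in `ℋ` one has
`Hom(C₁^{≤0} ∪ 𝒯, ℱ ∪ C₂^{≥1}) = 0`, and this identifies `C₁^{≤0} * 𝒯` with `⊥(ℱ ∪ C₂^{≥1})` and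
`ℱ * C₂^{≥1}` with `(C₁^{≤0} ∪ 𝒯)^⊥`; in these terms both maps are visibly well defined and
mutually inverse. What remains is to decompose every object along `ψ(𝒯, ℱ)`. As `D` is only
pretriangulated there is no octahedral axiom to assemble the pieces; they are recognised
instead by their orthogonality, which needs only the long exact Hom sequences.
-/

open ZeroObject

section Orthogonals

variable {C : Type*} [Category C] [HasZeroMorphisms C]

def leftOrth (S : Set C) : Set C := {A | ∀ B ∈ S, ∀ f : A ⟶ B, f = 0}

def rightOrth (S : Set C) : Set C := {B | ∀ A ∈ S, ∀ f : A ⟶ B, f = 0}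

variable {S S' : Set C}

lemma leftOrth_anti (h : S ⊆ S') : leftOrth S' ⊆ leftOrth S :=
  fun _ hA B hB => hA B (h hB)

lemma rightOrth_anti (h : S ⊆ S') : rightOrth S' ⊆ rightOrth S :=
  fun _ hB A hA => hB A (h hA)

lemma subset_leftOrth_iff_subset_rightOrth {X Y : Set C} : X ⊆ leftOrth Y ↔ Y ⊆ rightOrth X :=
  ⟨fun h _ hB _ hA f => h hA _ hB f, fun h _ hA _ hB f => h hB _ hA f⟩

lemma mem_leftOrth_of_isZero {Z : C} (hZ : IsZero Z) : Z ∈ leftOrth S :=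
  fun _ _ f => hZ.eq_of_src f 0

lemma mem_rightOrth_of_isZero {Z : C} (hZ : IsZero Z) : Z ∈ rightOrth S :=
  fun _ _ f => hZ.eq_of_tgt f 0

lemma isZero_of_mem_leftOrth {A : C} (hA : A ∈ leftOrth S) (hA' : A ∈ S) : IsZero A :=
  (IsZero.iff_id_eq_zero A).2 (hA A hA' _)

lemma isZero_of_mem_rightOrth {A : C} (hA : A ∈ rightOrth S) (hA' : A ∈ S) : IsZero A :=
  (IsZero.iff_id_eq_zero A).2 (hA A hA' _)

end Orthogonals

section AdditiveOrthogonals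

variable {C : Type*} [Category C] [Preadditive C] [HasBinaryBiproducts C]

lemma leftOrth_additive (S : Set C) : AdditiveClosed C (leftOrth S) where
  iso A B e hA M hM f := by
    rw [← e.inv_hom_id_assoc f, hA M hM (e.hom ≫ f), comp_zero]
  zero Z hZ _ _ f := hZ.eq_of_src f 0
  sum A hA B hB M hM f := biprod.hom_ext' f 0
    (by rw [comp_zero]; exact hA M hM _) (by rw [comp_zero]; exact hB M hM _)
  summand A hA X i p hip M hM f := by
    rw [← id_comp f, ← hip, assoc, hA M hM (p ≫ f), comp_zero]

lemma rightOrth_additive (S : Set C) : AdditiveClosed C (rightOrth S) where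
  iso A B e hA P hP f := by
    rw [← comp_id f, ← e.inv_hom_id, ← assoc, hA P hP (f ≫ e.inv), zero_comp]
  zero Z hZ _ _ f := hZ.eq_of_tgt f 0
  sum A hA B hB P hP f := biprod.hom_ext f 0
    (by rw [zero_comp]; exact hA P hP _) (by rw [zero_comp]; exact hB P hP _)
  summand A hA X i p hip P hP f := by
    rw [← comp_id f, ← hip, ← assoc, hA P hP (f ≫ i), zero_comp]

end AdditiveOrthogonals

section Pretriangulated

variable {C : Type*} [Category C] [Preadditive C] [HasZeroObject C] [HasShift C ℤ]
  [∀ n : ℤ, (shiftFunctor C n).Additive] [Pretriangulated C]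

lemma yoneda_exact₁_of_distTriang (T : Triangle C) (hT : T ∈ distTriang C) {X : C}
    (f : T.obj₁ ⟶ X) (hf : T.mor₃ ≫ f⟦(1 : ℤ)⟧' = 0) : ∃ g : T.obj₂ ⟶ X, f = T.mor₁ ≫ g := by
  obtain ⟨g, hg⟩ := T.rotate.rotate.yoneda_exact₂
    (rot_of_distTriang _ (rot_of_distTriang _ hT)) (f⟦(1 : ℤ)⟧') hf
  obtain ⟨g', rfl⟩ : ∃ g' : T.obj₂ ⟶ X, g'⟦(1 : ℤ)⟧' = g :=
    (shiftFunctor C (1 : ℤ)).map_surjective g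
  refine ⟨-g', (shiftFunctor C (1 : ℤ)).map_injective ?_⟩
  rw [Functor.map_comp, Functor.map_neg, Preadditive.comp_neg]
  exact hg.trans (Preadditive.neg_comp _ _)

section Triangle

variable {T : Triangle C} (hT : T ∈ distTriang C) {S : Set C}
include hT

lemma obj₁_mem_rightOrth (h₂ : T.obj₂ ∈ rightOrth S)
    (h₃ : ∀ P ∈ S, ∀ g : P⟦(1 : ℤ)⟧ ⟶ T.obj₃, g = 0) : T.obj₁ ∈ rightOrth S := by
  intro P hP f
  obtain ⟨g, hg⟩ := T.coyoneda_exact₁ hT (f⟦(1 : ℤ)⟧')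
    (by rw [← Functor.map_comp, h₂ P hP (f ≫ T.mor₁), Functor.map_zero])
  apply (shiftFunctor C (1 : ℤ)).map_injective
  rw [hg, h₃ P hP g, zero_comp, Functor.map_zero]

lemma obj₃_mem_leftOrth (h₂ : T.obj₂ ∈ leftOrth S)
    (h₁ : ∀ M ∈ S, ∀ g : T.obj₁⟦(1 : ℤ)⟧ ⟶ M, g = 0) : T.obj₃ ∈ leftOrth S := by
  intro M hM f
  obtain ⟨g, rfl⟩ := T.yoneda_exact₃ hT f (h₂ M hM _)
  rw [h₁ M hM g, comp_zero]

lemma exists_comp_mor₁_eq_id_of_mor₂_eq_zero (h : T.mor₂ = 0) :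
    ∃ r : T.obj₂ ⟶ T.obj₁, r ≫ T.mor₁ = 𝟙 T.obj₂ := by
  obtain ⟨r, hr⟩ := T.coyoneda_exact₂ hT (𝟙 _) (by rw [id_comp, h])
  exact ⟨r, hr.symm⟩

lemma exists_mor₂_comp_eq_id_of_mor₁_eq_zero (h : T.mor₁ = 0) :
    ∃ s : T.obj₃ ⟶ T.obj₂, T.mor₂ ≫ s = 𝟙 T.obj₂ := by
  obtain ⟨s, hs⟩ := T.yoneda_exact₂ hT (𝟙 _) (by rw [comp_id, h])
  exact ⟨s, hs.symm⟩

end Triangle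

section Extensions

variable {X X' Y Y' S : Set C}

lemma starSet_mono (hX : X ⊆ X') (hY : Y ⊆ Y') : starSet C X Y ⊆ starSet C X' Y' :=
  fun _ ⟨A, B, f, g, h, hA, hB, hT⟩ => ⟨A, B, f, g, h, hX hA, hY hB, hT⟩

lemma subset_starSet_left (hY : (0 : C) ∈ Y) : X ⊆ starSet C X Y :=
  fun A hA => ⟨A, 0, 𝟙 A, 0, 0, hA, hY, contractible_distinguished A⟩

lemma subset_starSet_right (hX : (0 : C) ∈ X) : Y ⊆ starSet C X Y :=
  fun B hB => ⟨0, B, 0, 𝟙 B, 0, hX, hB, contractible_distinguished₁ B⟩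

lemma starSet_subset_leftOrth (hX : X ⊆ leftOrth S) (hY : Y ⊆ leftOrth S) :
    starSet C X Y ⊆ leftOrth S := by
  rintro E ⟨A, B, f, g, h, hA, hB, hT⟩ M hM φ
  obtain ⟨ψ, rfl⟩ := Triangle.yoneda_exact₂ _ hT φ (hX hA M hM _)
  rw [hY hB M hM ψ]
  exact comp_zero

lemma starSet_subset_rightOrth (hX : X ⊆ rightOrth S) (hY : Y ⊆ rightOrth S) :
    starSet C X Y ⊆ rightOrth S := by
  rintro E ⟨A, B, f, g, h, hA, hB, hT⟩ P hP φ
  obtain ⟨ψ, rfl⟩ := Triangle.coyoneda_exact₂ _ hT φ (hY hB P hP _)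
  rw [hX hA P hP ψ]
  exact zero_comp

end Extensions

section Composites

variable {S : Set C}

lemma cone_comp_mem_rightOrth {X Y Z C₁ C₂ C₃ : C} {f₁ : X ⟶ Y} {f₂ : Y ⟶ Z}
    {g₁ : Y ⟶ C₁} {h₁ : C₁ ⟶ X⟦(1 : ℤ)⟧} {g₂ : Z ⟶ C₂} {h₂ : C₂ ⟶ Y⟦(1 : ℤ)⟧}
    {g₃ : Z ⟶ C₃} {h₃ : C₃ ⟶ X⟦(1 : ℤ)⟧}
    (hT₁ : Triangle.mk f₁ g₁ h₁ ∈ distTriang C) (hT₂ : Triangle.mk f₂ g₂ h₂ ∈ distTriang C)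
    (hT₃ : Triangle.mk (f₁ ≫ f₂) g₃ h₃ ∈ distTriang C)
    (hC₁ : C₁ ∈ rightOrth S) (hC₂ : C₂ ∈ rightOrth S) : C₃ ∈ rightOrth S := by
  intro P hP φ
  have hφh₃ : φ ≫ h₃ = 0 := by
    have hf₁ : (φ ≫ h₃) ≫ f₁⟦(1 : ℤ)⟧' = 0 := by
      obtain ⟨ζ, hζ⟩ : ∃ ζ : P ⟶ C₂, (φ ≫ h₃) ≫ f₁⟦(1 : ℤ)⟧' = ζ ≫ h₂ :=
        Triangle.coyoneda_exact₁ _ hT₂ _ (by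
          have h₃₁ : h₃ ≫ (f₁ ≫ f₂)⟦(1 : ℤ)⟧' = 0 := comp_distTriang_mor_zero₃₁ _ hT₃
          change ((φ ≫ h₃) ≫ f₁⟦(1 : ℤ)⟧') ≫ f₂⟦(1 : ℤ)⟧' = 0
          rw [assoc, assoc, ← Functor.map_comp, h₃₁, comp_zero])
      rw [hζ, hC₂ P hP ζ, zero_comp]
    obtain ⟨ζ, hζ⟩ : ∃ ζ : P ⟶ C₁, φ ≫ h₃ = ζ ≫ h₁ := Triangle.coyoneda_exact₁ _ hT₁ _ hf₁
    rw [hζ, hC₁ P hP ζ, zero_comp]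
  obtain ⟨χ, rfl⟩ : ∃ χ : P ⟶ Z, φ = χ ≫ g₃ := Triangle.coyoneda_exact₃ _ hT₃ φ hφh₃
  obtain ⟨χ, rfl⟩ : ∃ χ' : P ⟶ Y, χ = χ' ≫ f₂ :=
    Triangle.coyoneda_exact₂ _ hT₂ χ (hC₂ P hP _)
  obtain ⟨χ, rfl⟩ : ∃ χ' : P ⟶ X, χ = χ' ≫ f₁ :=
    Triangle.coyoneda_exact₂ _ hT₁ χ (hC₁ P hP _)
  have h₁₂ : (f₁ ≫ f₂) ≫ g₃ = 0 := comp_distTriang_mor_zero₁₂ _ hT₃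
  simp only [assoc] at h₁₂ ⊢
  rw [h₁₂, comp_zero]

lemma fiber_comp_mem_leftOrth {X Y Z K₁ K₂ K₃ : C} {f₁ : X ⟶ Y} {f₂ : Y ⟶ Z}
    {i₁ : K₁ ⟶ X} {h₁ : Y ⟶ K₁⟦(1 : ℤ)⟧} {i₂ : K₂ ⟶ Y} {h₂ : Z ⟶ K₂⟦(1 : ℤ)⟧}
    {i₃ : K₃ ⟶ X} {h₃ : Z ⟶ K₃⟦(1 : ℤ)⟧}
    (hT₁ : Triangle.mk i₁ f₁ h₁ ∈ distTriang C) (hT₂ : Triangle.mk i₂ f₂ h₂ ∈ distTriang C)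
    (hT₃ : Triangle.mk i₃ (f₁ ≫ f₂) h₃ ∈ distTriang C)
    (hK₁ : K₁ ∈ leftOrth S) (hK₂ : K₂ ∈ leftOrth S) : K₃ ∈ leftOrth S := by
  intro M hM φ
  have shift_eq_zero : ∀ {K : C}, K ∈ leftOrth S → ∀ g : K⟦(1 : ℤ)⟧ ⟶ M⟦(1 : ℤ)⟧, g = 0 := by
    intro K hK g
    obtain ⟨g, rfl⟩ := (shiftFunctor C (1 : ℤ)).map_surjective g
    rw [hK M hM g, Functor.map_zero]
  have hh₃φ : h₃ ≫ φ⟦(1 : ℤ)⟧' = 0 := by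
    have hf₂ : f₂ ≫ h₃ ≫ φ⟦(1 : ℤ)⟧' = 0 := by
      obtain ⟨ζ, hζ⟩ : ∃ ζ : K₁⟦(1 : ℤ)⟧ ⟶ M⟦(1 : ℤ)⟧, f₂ ≫ h₃ ≫ φ⟦(1 : ℤ)⟧' = h₁ ≫ ζ :=
        Triangle.yoneda_exact₃ _ hT₁ _ (by
          have h₂₃ : (f₁ ≫ f₂) ≫ h₃ = 0 := comp_distTriang_mor_zero₂₃ _ hT₃
          simp only [assoc] at h₂₃
          change f₁ ≫ f₂ ≫ h₃ ≫ φ⟦(1 : ℤ)⟧' = 0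
          rw [reassoc_of% h₂₃, zero_comp])
      rw [hζ, shift_eq_zero hK₁ ζ, comp_zero]
    obtain ⟨ζ, hζ⟩ : ∃ ζ : K₂⟦(1 : ℤ)⟧ ⟶ M⟦(1 : ℤ)⟧, h₃ ≫ φ⟦(1 : ℤ)⟧' = h₂ ≫ ζ :=
      Triangle.yoneda_exact₃ _ hT₂ _ hf₂
    rw [hζ, shift_eq_zero hK₂ ζ, comp_zero]
  obtain ⟨Φ, rfl⟩ : ∃ Φ : X ⟶ M, φ = i₃ ≫ Φ := yoneda_exact₁_of_distTriang _ hT₃ φ hh₃φ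
  obtain ⟨Φ, rfl⟩ : ∃ Φ' : Y ⟶ M, Φ = f₁ ≫ Φ' := Triangle.yoneda_exact₂ _ hT₁ Φ (hK₁ M hM _)
  obtain ⟨Φ, rfl⟩ : ∃ Φ' : Z ⟶ M, Φ = f₂ ≫ Φ' := Triangle.yoneda_exact₂ _ hT₂ Φ (hK₂ M hM _)
  have h₁₂ : i₃ ≫ f₁ ≫ f₂ = 0 := comp_distTriang_mor_zero₁₂ _ hT₃
  rw [reassoc_of% h₁₂, zero_comp]

end Composites

namespace IsTStructure

variable {L G : Set C} (s : IsTStructure C L G)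
include s

lemma shift_mem {A : C} (hA : A ∈ L) : A⟦(1 : ℤ)⟧ ∈ L := by
  obtain ⟨B, hB, ⟨e⟩⟩ := s.shiftL hA
  exact s.isoL ((shiftFunctor C (1 : ℤ)).mapIso e ≪≫
    (shiftFunctorCompIsoId C (-1 : ℤ) 1 (by omega)).app B).symm hB trivial

lemma shift_hom_eq_zero {A B : C} (hA : A ∈ L) (hB : B ∈ shiftSet C G (-1))
    (f : A⟦(1 : ℤ)⟧ ⟶ B) : f = 0 :=
  s.hom_zero _ (s.shift_mem hA) B hB f

lemma mem_left {A : C} (hA : A ∈ leftOrth (shiftSet C G (-1))) : A ∈ L := by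
  obtain ⟨ℓ, r, α, β, γ, hℓ, hr, hT⟩ := s.cover A trivial
  have hr₀ : IsZero r := isZero_of_mem_leftOrth
    (obj₃_mem_leftOrth hT hA fun _ hM g => s.shift_hom_eq_zero hℓ hM g) hr
  have : IsIso α := (Triangle.isZero₃_iff_isIso₁ _ hT).1 hr₀
  exact s.isoL (asIso α) hℓ trivial

lemma mem_right {B : C} (hB : B ∈ rightOrth L) : B ∈ shiftSet C G (-1) := by
  obtain ⟨ℓ, r, α, β, γ, hℓ, ⟨E, hE, ⟨e⟩⟩, hT⟩ := s.cover B trivial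
  have hℓ₀ : IsZero ℓ := isZero_of_mem_rightOrth
    (obj₁_mem_rightOrth hT hB fun _ hP g => s.shift_hom_eq_zero hP ⟨E, hE, ⟨e⟩⟩ g) hℓ
  have : IsIso β := (Triangle.isZero₁_iff_isIso₂ _ hT).1 hℓ₀
  exact ⟨E, hE, ⟨asIso β ≪≫ e⟩⟩

lemma eq_leftOrth : L = leftOrth (shiftSet C G (-1)) :=
  subset_antisymm (fun A hA => s.hom_zero A hA) fun _ => s.mem_left

lemma eq_rightOrth : shiftSet C G (-1) = rightOrth L :=
  subset_antisymm (fun B hB A hA => s.hom_zero A hA B hB) fun _ => s.mem_right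

lemma zero_mem_left : (0 : C) ∈ L :=
  s.mem_left (mem_leftOrth_of_isZero (isZero_zero C))

lemma zero_mem_right : (0 : C) ∈ shiftSet C G (-1) :=
  s.mem_right (mem_rightOrth_of_isZero (isZero_zero C))

end IsTStructure

end Pretriangulated

section TorsionPairs

variable {C : Type*} [Category C] [Preadditive C] [HasZeroObject C] [HasShift C ℤ]
  [∀ n : ℤ, (shiftFunctor C n).Additive] [Pretriangulated C] [HasBinaryBiproducts C]
  {L₁ G₁ L₂ G₂ : Set C}

lemma IsTStructure.additive_right {L G : Set C} (s : IsTStructure C L G) :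
    AdditiveClosed C (shiftSet C G (-1)) :=
  s.eq_rightOrth ▸ rightOrth_additive L

lemma IsTStructure.additive_left {L G : Set C} (s : IsTStructure C L G) : AdditiveClosed C L :=
  s.eq_leftOrth ▸ leftOrth_additive _

namespace IsTorsionPair

variable {U V : Set C} (tp : IsTorsionPair C U V)
include tp

lemma mem_torsion {A : C} (hA : A ∈ leftOrth V) : A ∈ U := by
  obtain ⟨B, E, f, g, h, hB, hE, hT⟩ := tp.cover A
  obtain ⟨r, hr⟩ := exists_comp_mor₁_eq_id_of_mor₂_eq_zero hT (hA E hE g)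
  exact tp.addU.summand B hB A r f hr

lemma mem_torsionFree {A : C} (hA : A ∈ rightOrth U) : A ∈ V := by
  obtain ⟨B, E, f, g, h, hB, hE, hT⟩ := tp.cover A
  obtain ⟨r, hr⟩ := exists_mor₂_comp_eq_id_of_mor₁_eq_zero hT (hA B hB f)
  exact tp.addV.summand E hE A g r hr

lemma isTorsionPairIn_inter (s₁ : IsTStructure C L₁ G₁) (s₂ : IsTStructure C L₂ G₂)
    (hLU : L₁ ⊆ U) (hUL : U ⊆ L₂) :
    IsTorsionPairIn C (L₂ ∩ shiftSet C G₁ (-1)) (U ∩ shiftSet C G₁ (-1)) (V ∩ L₂) where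
  subT _ hA := ⟨hUL hA.1, hA.2⟩
  subF _ hB := ⟨hB.2, s₁.mem_right fun P hP f => tp.hom_zero P (hLU hP) _ hB.1 f⟩
  isoT _ _ e hA hB := ⟨tp.addU.iso e hA.1, hB.2⟩
  isoF _ _ e hA hB := ⟨tp.addV.iso e hA.1, hB.1⟩
  zeroT Z hZ hH := ⟨tp.addU.zero Z hZ, hH.2⟩
  zeroF Z hZ hH := ⟨tp.addV.zero Z hZ, hH.1⟩
  sumT A hA B hB := ⟨tp.addU.sum A hA.1 B hB.1, s₁.additive_right.sum A hA.2 B hB.2⟩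
  sumF A hA B hB := ⟨tp.addV.sum A hA.1 B hB.1, s₂.additive_left.sum A hA.2 B hB.2⟩
  summandT A hA X i p hip hX := ⟨tp.addU.summand A hA.1 X i p hip, hX.2⟩
  summandF A hA X i p hip hX := ⟨tp.addV.summand A hA.1 X i p hip, hX.1⟩
  hom_zero A hA B hB := tp.hom_zero A hA.1 B hB.1
  cover X hX := by
    obtain ⟨A, B, f, g, h, hA, hB, hT⟩ := tp.cover X
    refine ⟨A, B, f, g, h, ⟨hA, s₁.mem_right ?_⟩, ⟨hB, s₂.mem_left ?_⟩, hT⟩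
    · exact obj₁_mem_rightOrth hT (fun P hP φ => s₁.hom_zero P hP X hX.2 φ)
        fun P hP φ => tp.hom_zero _ (hLU (s₁.shift_mem hP)) B hB φ
    · exact obj₃_mem_leftOrth hT (s₂.hom_zero X hX.1)
        fun M hM φ => s₂.shift_hom_eq_zero (hUL hA) hM φ

lemma starSet_inter_eq_torsion (s₁ : IsTStructure C L₁ G₁) (hLU : L₁ ⊆ U) :
    starSet C L₁ (U ∩ shiftSet C G₁ (-1)) = U := by
  refine subset_antisymm (fun A hA => tp.mem_torsion ?_) fun A hA => ?_
  · exact starSet_subset_leftOrth (fun ℓ hℓ => tp.hom_zero ℓ (hLU hℓ))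
      (fun B hB => tp.hom_zero B hB.1) hA
  · obtain ⟨ℓ, E, f, g, h, hℓ, hE, hT⟩ := s₁.cover A trivial
    refine ⟨ℓ, E, f, g, h, hℓ, ⟨tp.mem_torsion ?_, hE⟩, hT⟩
    exact obj₃_mem_leftOrth hT (tp.hom_zero A hA)
      fun M hM φ => tp.hom_zero _ (hLU (s₁.shift_mem hℓ)) M hM φ

lemma starSet_inter_eq_torsionFree (s₂ : IsTStructure C L₂ G₂) (hUL : U ⊆ L₂) :
    starSet C (V ∩ L₂) (shiftSet C G₂ (-1)) = V := by
  refine subset_antisymm (fun B hB => tp.mem_torsionFree ?_) fun B hB => ?_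
  · exact starSet_subset_rightOrth (fun E hE P hP φ => tp.hom_zero P hP E hE.1 φ)
      (fun r hr P hP φ => s₂.hom_zero P (hUL hP) r hr φ) hB
  · obtain ⟨E, r, f, g, h, hE, hr, hT⟩ := s₂.cover B trivial
    refine ⟨E, r, f, g, h, ⟨tp.mem_torsionFree ?_, hE⟩, hr, hT⟩
    exact obj₁_mem_rightOrth hT (fun P hP φ => tp.hom_zero P hP B hB φ)
      fun P hP φ => s₂.shift_hom_eq_zero (hUL hP) hr φ

end IsTorsionPair

namespace IsTorsionPairIn

section

variable {H T F : Set C} (tp : IsTorsionPairIn C H T F)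
include tp

lemma mem_torsion {A : C} (hH : A ∈ H) (hA : A ∈ leftOrth F) : A ∈ T := by
  obtain ⟨B, E, f, g, h, hB, hE, hT⟩ := tp.cover A hH
  obtain ⟨r, hr⟩ := exists_comp_mor₁_eq_id_of_mor₂_eq_zero hT (hA E hE g)
  exact tp.summandT B hB A r f hr hH

lemma mem_torsionFree {A : C} (hH : A ∈ H) (hA : A ∈ rightOrth T) : A ∈ F := by
  obtain ⟨B, E, f, g, h, hB, hE, hT⟩ := tp.cover A hH
  obtain ⟨r, hr⟩ := exists_mor₂_comp_eq_id_of_mor₁_eq_zero hT (hA B hB f)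
  exact tp.summandF E hE A g r hr hH

end

section

variable {T F : Set C} (tp : IsTorsionPairIn C (L₂ ∩ shiftSet C G₁ (-1)) T F)
  (s₁ : IsTStructure C L₁ G₁) (s₂ : IsTStructure C L₂ G₂) (h : L₁ ⊆ L₂)
include tp s₁ s₂ h

lemma union_subset_leftOrth_union : L₁ ∪ T ⊆ leftOrth (F ∪ shiftSet C G₂ (-1)) := by
  rintro P (hP | hP) M (hM | hM) f
  · exact s₁.hom_zero P hP M (tp.subF hM).2 f
  · exact s₂.hom_zero P (h hP) M hM f
  · exact tp.hom_zero P hP M hM f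
  · exact s₂.hom_zero P (tp.subT hP).1 M hM f

lemma starSet_eq_leftOrth : starSet C L₁ T = leftOrth (F ∪ shiftSet C G₂ (-1)) := by
  have hU := tp.union_subset_leftOrth_union s₁ s₂ h
  refine subset_antisymm
    (starSet_subset_leftOrth (Set.subset_union_left.trans hU) (Set.subset_union_right.trans hU))
    fun A hA => ?_
  obtain ⟨ℓ, E, f, g, k, hℓ, hE, hT⟩ := s₁.cover A trivial
  have hE' : E ∈ leftOrth (F ∪ shiftSet C G₂ (-1)) :=
    obj₃_mem_leftOrth hT hA fun M hM φ => hU (Or.inl (s₁.shift_mem hℓ)) M hM φ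
  have hE₂ : E ∈ L₂ := s₂.mem_left (leftOrth_anti Set.subset_union_right hE')
  exact ⟨ℓ, E, f, g, k, hℓ, tp.mem_torsion ⟨hE₂, hE⟩ (leftOrth_anti Set.subset_union_left hE'), hT⟩

lemma starSet_eq_rightOrth : starSet C F (shiftSet C G₂ (-1)) = rightOrth (L₁ ∪ T) := by
  have hV := subset_leftOrth_iff_subset_rightOrth.1 (tp.union_subset_leftOrth_union s₁ s₂ h)
  refine subset_antisymm
    (starSet_subset_rightOrth (Set.subset_union_left.trans hV) (Set.subset_union_right.trans hV))
    fun B hB => ?_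
  obtain ⟨E, r, f, g, k, hE, hr, hT⟩ := s₂.cover B trivial
  have hL₂ : L₁ ∪ T ⊆ L₂ := Set.union_subset h fun _ ht => (tp.subT ht).1
  have hE' : E ∈ rightOrth (L₁ ∪ T) :=
    obj₁_mem_rightOrth hT hB fun P hP φ => s₂.shift_hom_eq_zero (hL₂ hP) hr φ
  have hE₁ : E ∈ shiftSet C G₁ (-1) := s₁.mem_right (rightOrth_anti Set.subset_union_left hE')
  exact ⟨E, r, f, g, k, tp.mem_torsionFree ⟨hE, hE₁⟩ (rightOrth_anti Set.subset_union_right hE'),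
    hr, hT⟩

/-- To decompose `A`, truncate it by `s₁` as `a → A → c`, truncate `c` by `s₂` as
`c' → c → b` (then `c' ∈ ℋ`), split `c'` as `t → c' → f`, and take `y` the cone of `t → c`
and `x` the fibre of `A → c → y`. -/
lemma mem_starSet_starSet (A : C) :
    A ∈ starSet C (starSet C L₁ T) (starSet C F (shiftSet C G₂ (-1))) := by
  have hU := tp.union_subset_leftOrth_union s₁ s₂ h
  have hV := subset_leftOrth_iff_subset_rightOrth.1 hU
  obtain ⟨a, c, u, v, δ, ha, hc, hT₁⟩ := s₁.cover A trivial
  obtain ⟨c', b, ι, π, γ, hc', hb, hT₂⟩ := s₂.cover c trivial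
  have hc'₁ : c' ∈ shiftSet C G₁ (-1) := s₁.mem_right <|
    obj₁_mem_rightOrth hT₂ (fun P hP φ => s₁.hom_zero P hP c hc φ)
      fun P hP φ => s₂.shift_hom_eq_zero (h hP) hb φ
  obtain ⟨t, f, j, q, ε, ht, hf, hT₃⟩ := tp.cover c' ⟨hc', hc'₁⟩
  obtain ⟨y, n, e, hT₄⟩ := distinguished_cocone_triangle (j ≫ ι)
  obtain ⟨x, m, k, hT₅⟩ := distinguished_cocone_triangle₁ (v ≫ n)
  refine ⟨x, y, m, v ≫ n, k, ?_, ?_, hT₅⟩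
  · rw [tp.starSet_eq_leftOrth s₁ s₂ h]
    exact fiber_comp_mem_leftOrth hT₁ hT₄ hT₅ (hU (Or.inl ha)) (hU (Or.inr ht))
  · rw [tp.starSet_eq_rightOrth s₁ s₂ h]
    exact cone_comp_mem_rightOrth hT₃ hT₂ hT₄ (hV (Or.inl hf)) (hV (Or.inr hb))

lemma isTorsionPair_starSet :
    IsTorsionPair C (starSet C L₁ T) (starSet C F (shiftSet C G₂ (-1))) where
  addU := tp.starSet_eq_leftOrth s₁ s₂ h ▸ leftOrth_additive _
  addV := tp.starSet_eq_rightOrth s₁ s₂ h ▸ rightOrth_additive _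
  hom_zero := by
    rw [tp.starSet_eq_rightOrth s₁ s₂ h]
    exact starSet_subset_leftOrth (fun A hA B hB f => hB A (Or.inl hA) f)
      fun A hA B hB f => hB A (Or.inr hA) f
  cover := tp.mem_starSet_starSet s₁ s₂ h

lemma starSet_inter_eq_torsion : starSet C L₁ T ∩ shiftSet C G₁ (-1) = T := by
  refine subset_antisymm (fun A ⟨hA, hA₁⟩ => ?_)
    fun t ht => ⟨subset_starSet_right s₁.zero_mem_left ht, (tp.subT ht).2⟩
  rw [tp.starSet_eq_leftOrth s₁ s₂ h] at hA
  exact tp.mem_torsion ⟨s₂.mem_left (leftOrth_anti Set.subset_union_right hA), hA₁⟩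
    (leftOrth_anti Set.subset_union_left hA)

lemma starSet_inter_eq_torsionFree : starSet C F (shiftSet C G₂ (-1)) ∩ L₂ = F := by
  refine subset_antisymm (fun B ⟨hB, hB₂⟩ => ?_)
    fun f hf => ⟨subset_starSet_left s₂.zero_mem_right hf, (tp.subF hf).1⟩
  rw [tp.starSet_eq_rightOrth s₁ s₂ h] at hB
  exact tp.mem_torsionFree ⟨hB₂, s₁.mem_right (rightOrth_anti Set.subset_union_left hB)⟩
    (rightOrth_anti Set.subset_union_right hB)

end

end IsTorsionPairIn

end TorsionPairs

/-- Corollary 3.11 (1): for `t`-structures `s₁ = (L₁, G₁)`,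
`s₂ = (L₂, G₂)` with `L₁ ⊆ L₂` and `ℋ = C₂^{≤0} ∩ C₁^{≥1} = L₂ ∩ G₁[-1]`, the maps
`φ(𝒰,𝒱) = (𝒰 ∩ C₁^{≥1}, 𝒱 ∩ C₂^{≤0})` and `ψ(𝒯,ℱ) = (C₁^{≤0} * 𝒯, ℱ * C₂^{≥1})`
are mutually inverse, order preserving bijections between torsion pairs `(𝒰,𝒱)` in `D`
with `C₁^{≤0} ⊆ 𝒰 ⊆ C₂^{≤0}` and torsion pairs in `ℋ`. -/
theorem stmt5 (L₁ G₁ L₂ G₂ : Set D)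
    (s₁ : IsTStructure D L₁ G₁) (s₂ : IsTStructure D L₂ G₂) (h : L₁ ⊆ L₂) :
    -- φ is well defined and ψ ∘ φ = id
    (∀ U V, IsTorsionPair D U V → L₁ ⊆ U → U ⊆ L₂ →
       IsTorsionPairIn D (L₂ ∩ shiftSet D G₁ (-1)) (U ∩ shiftSet D G₁ (-1)) (V ∩ L₂) ∧
       starSet D L₁ (U ∩ shiftSet D G₁ (-1)) = U ∧
       starSet D (V ∩ L₂) (shiftSet D G₂ (-1)) = V) ∧
    -- ψ is well defined and φ ∘ ψ = id
    (∀ T F, IsTorsionPairIn D (L₂ ∩ shiftSet D G₁ (-1)) T F →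
       IsTorsionPair D (starSet D L₁ T) (starSet D F (shiftSet D G₂ (-1))) ∧
       L₁ ⊆ starSet D L₁ T ∧ starSet D L₁ T ⊆ L₂ ∧
       starSet D L₁ T ∩ shiftSet D G₁ (-1) = T ∧
       starSet D F (shiftSet D G₂ (-1)) ∩ L₂ = F) ∧
    -- φ preserves the orders (inclusion of torsion classes)
    (∀ U V U' V', IsTorsionPair D U V → IsTorsionPair D U' V' →
       L₁ ⊆ U → U ⊆ L₂ → L₁ ⊆ U' → U' ⊆ L₂ → U ⊆ U' →
       U ∩ shiftSet D G₁ (-1) ⊆ U' ∩ shiftSet D G₁ (-1)) ∧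
    -- ψ preserves the orders
    (∀ T F T' F', IsTorsionPairIn D (L₂ ∩ shiftSet D G₁ (-1)) T F →
       IsTorsionPairIn D (L₂ ∩ shiftSet D G₁ (-1)) T' F' → T ⊆ T' →
       starSet D L₁ T ⊆ starSet D L₁ T') := by
  refine ⟨fun U V tp hLU hUL => ⟨tp.isTorsionPairIn_inter s₁ s₂ hLU hUL,
      tp.starSet_inter_eq_torsion s₁ hLU, tp.starSet_inter_eq_torsionFree s₂ hUL⟩,
    fun T F tp => ⟨tp.isTorsionPair_starSet s₁ s₂ h, ?_, ?_,
      tp.starSet_inter_eq_torsion s₁ s₂ h, tp.starSet_inter_eq_torsionFree s₁ s₂ h⟩,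
    fun U V U' V' _ _ _ _ _ _ hUU' => Set.inter_subset_inter_left _ hUU',
    fun T F T' F' _ _ hTT' => starSet_mono subset_rfl hTT'⟩
  · exact subset_starSet_left (tp.zeroT 0 (isZero_zero D) ⟨s₂.zero_mem_left, s₁.zero_mem_right⟩)
  · rw [tp.starSet_eq_leftOrth s₁ s₂ h]
    exact fun A hA => s₂.mem_left (leftOrth_anti Set.subset_union_right hA)
end
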